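/- Let H be a real Hilbert space and S : H → H a bounded self-adjoint invertible operator. Suppose H = E₊ ⊕ E₋ is an orthogonal direct sum decomposition into closed S-invariant subspaces such that ⟪Sx, x⟫ > 0 for every nonzero x ∈ E₊ and ⟪Sx, x⟫ < 0 for every nonzero x ∈ E₋, and let P₊ and P₋ denote the orthogonal projections onto E₊ and E₋. Then for every t ∈ [0,1], the operator Tₜ = (t·I + (1−t)·S)∘P₊ + (−t·I + (1−t)·S)∘P₋ is bounded, self-adjoint and invertible; moreover T₀ = S, T₁ = P₊ − P₋, the map t ↦ Tₜ is continuous in operator norm, and each Tₜ leaves E₊ and E₋ invariant with ⟪Tₜx, x⟫ > 0 for nonzero x ∈ E₊ and ⟪Tₜx, x⟫ < 0 for nonzero x ∈ E₋. -/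

import Mathlib

open scoped RealInnerProductSpace

variable {H : Type*} [NormedAddCommGroup H] [InnerProductSpace ℝ H]

/-- The path `Tₜ = (t·I + (1−t)·S)∘P₊ + (−t·I + (1−t)·S)∘P₋` of operators connecting `S`
(at `t = 0`) to the symmetry `P₊ − P₋` (at `t = 1`). -/
noncomputable def connectingPath (S Pp Pm : H →L[ℝ] H) (t : ℝ) : H →L[ℝ] H :=
  (t • ContinuousLinearMap.id ℝ H + (1 - t) • S).comp Pp
    + ((-t) • ContinuousLinearMap.id ℝ H + (1 - t) • S).comp Pm

/-- A symmetric bounded-below operator on a real Hilbert space is invertible. -/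
lemma isUnit_of_symm_of_bddBelow [CompleteSpace H] (A : H →L[ℝ] H)
    (hsym : ∀ x y : H, ⟪A x, y⟫ = ⟪x, A y⟫)
    {c : ℝ} (hc : 0 < c) (hbd : ∀ x : H, c * ‖x‖ ≤ ‖A x‖) : IsUnit A := by
  have hker : ∀ x : H, A x = 0 → x = 0 := by
    intro x hx
    have h1 := hbd x
    rw [hx, norm_zero] at h1
    have hx0 : ‖x‖ ≤ 0 := nonpos_of_mul_nonpos_right (by linarith) hc
    exact norm_eq_zero.mp (le_antisymm hx0 (norm_nonneg x))
  have hanti : AntilipschitzWith (⟨c, hc.le⟩ : NNReal)⁻¹ A := by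
    apply ContinuousLinearMap.antilipschitz_of_bound
    intro x
    have h := hbd x
    change ‖x‖ ≤ c⁻¹ * ‖A x‖
    rw [le_inv_mul_iff₀ hc]
    linarith
  have hclosed : IsClosed (LinearMap.range (A : H →ₗ[ℝ] H) : Set H) := by
    have he : (LinearMap.range (A : H →ₗ[ℝ] H) : Set H) = Set.range A := by
      ext y; simp [LinearMap.mem_range]
    rw [he]
    exact hanti.isClosed_range A.uniformContinuous
  have : CompleteSpace (LinearMap.range (A : H →ₗ[ℝ] H)) := hclosed.completeSpace_coe
  have horth : (LinearMap.range (A : H →ₗ[ℝ] H))ᗮ = ⊥ := by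
    rw [Submodule.eq_bot_iff]
    intro y hy
    apply hker y
    have h0 : ⟪A y, A y⟫ = 0 := by
      have h1 := (Submodule.mem_orthogonal _ y).mp hy (A (A y))
        (LinearMap.mem_range_self _ _)
      rwa [hsym] at h1
    exact inner_self_eq_zero.mp h0
  have hsurj : LinearMap.range (A : H →ₗ[ℝ] H) = ⊤ := Submodule.orthogonal_eq_bot_iff.mp horth
  rw [ContinuousLinearMap.isUnit_iff_bijective]
  exact ⟨fun x y hxy => sub_eq_zero.mp (hker _ (by rw [map_sub, hxy, sub_self])),
    LinearMap.range_eq_top.mp hsurj⟩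

/-- **First step of the proof of Lemma `lemmaconnected`.** Let `S` be a bounded
self-adjoint invertible operator on a real Hilbert space `H`, and let `H = E₊ ⊕ E₋` be an
orthogonal direct sum decomposition into closed `S`-invariant subspaces on which the
quadratic form of `S` is positive, resp. negative, definite; let `P₊, P₋` be the
orthogonal projections onto `E₊, E₋`. Then for every `t ∈ [0,1]` the operator
`Tₜ = (t·I + (1−t)·S)∘P₊ + (−t·I + (1−t)·S)∘P₋` is (bounded,) self-adjoint and
invertible, leaves `E₊` and `E₋` invariant with `⟪Tₜ x, x⟫ > 0` on `E₊ \ {0}` and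
`⟪Tₜ x, x⟫ < 0` on `E₋ \ {0}`; moreover `T₀ = S`, `T₁ = P₊ − P₋`, and `t ↦ Tₜ` is
continuous in operator norm. -/
theorem connectingPath_selfAdjoint_invertible
    [CompleteSpace H]
    (S : H →L[ℝ] H) (hSsa : IsSelfAdjoint S) (hSinv : IsUnit S)
    (Ep Em : Submodule ℝ H)
    (hEpclosed : IsClosed (Ep : Set H)) (hEmclosed : IsClosed (Em : Set H))
    (hcompl : IsCompl Ep Em)
    (horth : ∀ x ∈ Ep, ∀ y ∈ Em, ⟪x, y⟫ = 0)
    (hSp : ∀ x ∈ Ep, S x ∈ Ep) (hSm : ∀ x ∈ Em, S x ∈ Em)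
    (hSpos : ∀ x ∈ Ep, x ≠ 0 → 0 < ⟪S x, x⟫)
    (hSneg : ∀ x ∈ Em, x ≠ 0 → ⟪S x, x⟫ < 0)
    (Pp Pm : H →L[ℝ] H)
    (hPp₁ : ∀ x ∈ Ep, Pp x = x) (hPp₂ : ∀ x ∈ Em, Pp x = 0)
    (hPm₁ : ∀ x ∈ Em, Pm x = x) (hPm₂ : ∀ x ∈ Ep, Pm x = 0) :
    (∀ t ∈ Set.Icc (0:ℝ) 1,
      IsSelfAdjoint (connectingPath S Pp Pm t) ∧
      IsUnit (connectingPath S Pp Pm t) ∧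
      (∀ x ∈ Ep, connectingPath S Pp Pm t x ∈ Ep) ∧
      (∀ x ∈ Em, connectingPath S Pp Pm t x ∈ Em) ∧
      (∀ x ∈ Ep, x ≠ 0 → 0 < ⟪connectingPath S Pp Pm t x, x⟫) ∧
      (∀ x ∈ Em, x ≠ 0 → ⟪connectingPath S Pp Pm t x, x⟫ < 0)) ∧
    connectingPath S Pp Pm 0 = S ∧
    connectingPath S Pp Pm 1 = Pp - Pm ∧
    ContinuousOn (fun t : ℝ => connectingPath S Pp Pm t) (Set.Icc 0 1) := by
  -- decomposition of an arbitrary vector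
  have hdec : ∀ x : H, ∃ p ∈ Ep, ∃ m ∈ Em, p + m = x := fun x =>
    by obtain ⟨p, m, hp, hm, h⟩ := Submodule.codisjoint_iff_exists_add_eq.mp hcompl.codisjoint x; exact ⟨p, hp, m, hm, h⟩
  have hadd : ∀ x : H, Pp x + Pm x = x := by
    intro x
    obtain ⟨p, hp, m, hm, rfl⟩ := hdec x
    rw [map_add, map_add, hPp₁ p hp, hPp₂ m hm, hPm₂ p hp, hPm₁ m hm]
    abel
  have hPpmem : ∀ x : H, Pp x ∈ Ep := by
    intro x
    obtain ⟨p, hp, m, hm, rfl⟩ := hdec x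
    rw [map_add, hPp₁ p hp, hPp₂ m hm, add_zero]; exact hp
  have hPmmem : ∀ x : H, Pm x ∈ Em := by
    intro x
    obtain ⟨p, hp, m, hm, rfl⟩ := hdec x
    rw [map_add, hPm₂ p hp, hPm₁ m hm, zero_add]; exact hm
  -- pointwise formula for the path
  have happ : ∀ (t : ℝ) (x : H),
      connectingPath S Pp Pm t x = t • (Pp x - Pm x) + (1 - t) • S x := by
    intro t x
    have hx : S (Pp x) + S (Pm x) = S x := by rw [← map_add, hadd]
    simp only [connectingPath, ContinuousLinearMap.add_apply,
      ContinuousLinearMap.coe_comp', Function.comp_apply,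
      ContinuousLinearMap.smul_apply, ContinuousLinearMap.id_apply]
    rw [← hx]
    module
  -- symmetry facts
  have hPpsym : ∀ x y : H, ⟪Pp x, y⟫ = ⟪x, Pp y⟫ := by
    intro x y
    obtain ⟨p, hp, m, hm, rfl⟩ := hdec x
    obtain ⟨q, hq, n, hn, rfl⟩ := hdec y
    rw [map_add, hPp₁ p hp, hPp₂ m hm, add_zero, map_add, hPp₁ q hq, hPp₂ n hn, add_zero]
    have hmq : ⟪m, q⟫ = 0 := by rw [real_inner_comm]; exact horth q hq m hm
    simp [inner_add_right, inner_add_left, horth p hp n hn, hmq]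
  have hPmsym : ∀ x y : H, ⟪Pm x, y⟫ = ⟪x, Pm y⟫ := by
    intro x y
    obtain ⟨p, hp, m, hm, rfl⟩ := hdec x
    obtain ⟨q, hq, n, hn, rfl⟩ := hdec y
    rw [map_add, hPm₂ p hp, hPm₁ m hm, zero_add, map_add, hPm₂ q hq, hPm₁ n hn, zero_add]
    have hmq : ⟪m, q⟫ = 0 := by rw [real_inner_comm]; exact horth q hq m hm
    simp [inner_add_right, inner_add_left, horth p hp n hn, hmq]
  have hSsym : ∀ x y : H, ⟪S x, y⟫ = ⟪x, S y⟫ :=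
    fun x y => (ContinuousLinearMap.isSelfAdjoint_iff_isSymmetric.mp hSsa) x y
  -- nonnegativity facts
  have hSpos' : ∀ x ∈ Ep, 0 ≤ ⟪S x, x⟫ := by
    intro x hx
    rcases eq_or_ne x 0 with rfl | hne
    · simp
    · exact (hSpos x hx hne).le
  have hSneg' : ∀ x ∈ Em, ⟪S x, x⟫ ≤ 0 := by
    intro x hx
    rcases eq_or_ne x 0 with rfl | hne
    · simp
    · exact (hSneg x hx hne).le
  -- key inner product identities
  have hcross : ∀ x : H, ⟪Pp x, Pm x⟫ = 0 := fun x => horth _ (hPpmem x) _ (hPmmem x)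
  have hJJ : ∀ x : H, ⟪Pp x - Pm x, Pp x - Pm x⟫ = ‖x‖ * ‖x‖ := by
    intro x
    have h1 := hcross x
    have h2 : ⟪Pm x, Pp x⟫ = 0 := by rw [real_inner_comm]; exact h1
    have h3 : ‖x‖ * ‖x‖ = ⟪x, x⟫ := (real_inner_self_eq_norm_mul_norm x).symm
    rw [h3]
    conv_rhs => rw [← hadd x]
    simp only [inner_sub_left, inner_sub_right, inner_add_left, inner_add_right, h1, h2]
    ring
  have hSJ : ∀ x : H, 0 ≤ ⟪S x, Pp x - Pm x⟫ := by
    intro x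
    have hx : S x = S (Pp x) + S (Pm x) := by rw [← map_add, hadd]
    rw [hx, inner_add_left, inner_sub_right, inner_sub_right,
      horth _ (hSp _ (hPpmem x)) _ (hPmmem x),
      show ⟪S (Pm x), Pp x⟫ = 0 by
        rw [real_inner_comm]; exact horth _ (hPpmem x) _ (hSm _ (hPmmem x))]
    have := hSpos' _ (hPpmem x)
    have := hSneg' _ (hPmmem x)
    have e1 : ⟪S (Pp x), Pp x⟫ = ⟪S (Pp x), Pp x⟫ := rfl
    linarith [hSpos' _ (hPpmem x), hSneg' _ (hPmmem x)]
  have hnormJ : ∀ x : H, ‖Pp x - Pm x‖ = ‖x‖ := by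
    intro x
    have h := hJJ x
    rw [real_inner_self_eq_norm_mul_norm] at h
    nlinarith [norm_nonneg (Pp x - Pm x), norm_nonneg x]
  -- T 0 = S
  have hT0 : connectingPath S Pp Pm 0 = S := by
    ext x; rw [happ]; simp
  -- T 1 = Pp - Pm
  have hT1 : connectingPath S Pp Pm 1 = Pp - Pm := by
    ext x; rw [happ]; simp
  refine ⟨?_, hT0, hT1, ?_⟩
  · rintro t ⟨ht0, ht1⟩
    refine ⟨?_, ?_, ?_, ?_, ?_, ?_⟩
    · -- self-adjoint
      rw [ContinuousLinearMap.isSelfAdjoint_iff_isSymmetric]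
      intro x y
      simp only [ContinuousLinearMap.coe_coe]
      rw [happ, happ]
      simp only [inner_add_left, inner_add_right, inner_sub_left, inner_sub_right,
        real_inner_smul_left, real_inner_smul_right]
      rw [hPpsym x y, hPmsym x y, hSsym x y]
    · -- invertible
      rcases eq_or_lt_of_le ht0 with rfl | htpos
      · rw [hT0]; exact hSinv
      · apply isUnit_of_symm_of_bddBelow _ ?_ htpos
        · intro x
          rcases eq_or_lt_of_le (norm_nonneg x) with hx0 | hx0
          · rw [← hx0, mul_zero]; exact norm_nonneg _
          · have hkey : t * (‖x‖ * ‖x‖) ≤ ⟪connectingPath S Pp Pm t x, Pp x - Pm x⟫ := by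
              rw [happ, inner_add_left, real_inner_smul_left, real_inner_smul_left, hJJ]
              have h1 := hSJ x
              nlinarith
            have hCS : ⟪connectingPath S Pp Pm t x, Pp x - Pm x⟫ ≤
                ‖connectingPath S Pp Pm t x‖ * ‖x‖ := by
              calc ⟪connectingPath S Pp Pm t x, Pp x - Pm x⟫
                  ≤ ‖connectingPath S Pp Pm t x‖ * ‖Pp x - Pm x‖ := real_inner_le_norm _ _
                _ = ‖connectingPath S Pp Pm t x‖ * ‖x‖ := by rw [hnormJ]
            have := hkey.trans hCS
            rw [show t * (‖x‖ * ‖x‖) = t * ‖x‖ * ‖x‖ by ring] at this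
            exact le_of_mul_le_mul_right this hx0
        · intro x y
          rw [happ, happ]
          simp only [inner_add_left, inner_add_right, inner_sub_left, inner_sub_right,
            real_inner_smul_left, real_inner_smul_right]
          rw [hPpsym x y, hPmsym x y, hSsym x y]
    · -- Ep invariant
      intro x hx
      rw [happ, hPp₁ x hx, hPm₂ x hx, sub_zero]
      exact Ep.add_mem (Ep.smul_mem _ hx) (Ep.smul_mem _ (hSp x hx))
    · -- Em invariant
      intro x hx
      rw [happ, hPp₂ x hx, hPm₁ x hx, zero_sub, smul_neg]
      exact Em.add_mem (Em.neg_mem (Em.smul_mem _ hx)) (Em.smul_mem _ (hSm x hx))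
    · -- positive on Ep
      intro x hx hne
      rw [happ, hPp₁ x hx, hPm₂ x hx, sub_zero, inner_add_left, real_inner_smul_left,
        real_inner_smul_left, real_inner_self_eq_norm_mul_norm]
      have hxn : 0 < ‖x‖ := norm_pos_iff.mpr hne
      rcases eq_or_lt_of_le ht0 with rfl | htpos
      · simpa using hSpos x hx hne
      · have h1 : 0 < t * (‖x‖ * ‖x‖) := by positivity
        have h2 : 0 ≤ (1 - t) * ⟪S x, x⟫ :=
          mul_nonneg (by linarith) (hSpos' x hx)
        linarith
    · -- negative on Em
      intro x hx hne
      rw [happ, hPp₂ x hx, hPm₁ x hx, zero_sub, inner_add_left, real_inner_smul_left,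
        real_inner_smul_left, inner_neg_left, real_inner_self_eq_norm_mul_norm]
      have hxn : 0 < ‖x‖ := norm_pos_iff.mpr hne
      rcases eq_or_lt_of_le ht0 with rfl | htpos
      · simpa using hSneg x hx hne
      · have h1 : 0 < t * (‖x‖ * ‖x‖) := by positivity
        have h2 : (1 - t) * ⟪S x, x⟫ ≤ 0 :=
          mul_nonpos_of_nonneg_of_nonpos (by linarith) (hSneg' x hx)
        linarith
  · -- continuity
    have hrepr : (fun t : ℝ => connectingPath S Pp Pm t)
        = fun t : ℝ => t • (Pp - Pm) + (1 - t) • (S.comp Pp + S.comp Pm) := by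
      funext t
      ext x
      rw [happ, show S x = S (Pp x) + S (Pm x) by rw [← map_add, hadd]]
      simp [ContinuousLinearMap.sub_apply, smul_sub, smul_add]
    rw [hrepr]
    exact (((continuous_id.smul continuous_const)).add
      ((continuous_const.sub continuous_id).smul continuous_const)).continuousOn
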